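/- arXiv:1610.02874 — 2 statements merged into one kernel-verified Lean document; each statement's English description precedes it below -/
import Mathlib

section
/- Let A be an N×N matrix over a field F. If c ∈ F^{n×1} and f₀,…,f_d ∈ F^{n×1} satisfy (S‖0)c + A·Σ_{i≥0} A^i y f_i = 0, where y = (S‖R) ∈ F^{N×n} and A = (M‖0), then, writing u for the first N−r coordinates of Σ_i A^i y f_i and v for the first r coordinates of c, one has M·u + S·v = 0. -/
/-- Correctness of Coppersmith's use of Schirokauer maps as initialization
vectors in block Wiedemann: with iteration matrix `M₀ = (M‖0)`, starting block
`y = (S‖R)`, if `(S‖0)c + M₀·Σᵢ M₀^i y fᵢ = 0`, then, taking `u` to be the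
first `N−r` coordinates of `Σᵢ M₀^i y fᵢ` and `v` the first `r` coordinates of
`c`, we have `M·u + S·v = 0`. -/
theorem coppersmith_schirokauer_init (F : Type*) [Field F] (a b s d : ℕ)
    (M : Matrix (Fin a ⊕ Fin b) (Fin a) F)
    (S : Matrix (Fin a ⊕ Fin b) (Fin b) F)
    (R : Matrix (Fin a ⊕ Fin b) (Fin s) F)
    (c : Fin b ⊕ Fin s → F) (fvec : ℕ → (Fin b ⊕ Fin s → F))
    (hrel :
      (Matrix.fromCols S (0 : Matrix (Fin a ⊕ Fin b) (Fin s) F)).mulVec c +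
      (Matrix.fromCols M (0 : Matrix (Fin a ⊕ Fin b) (Fin b) F)).mulVec
        (∑ i ∈ Finset.range (d + 1),
          ((Matrix.fromCols M (0 : Matrix (Fin a ⊕ Fin b) (Fin b) F)) ^ i *
            Matrix.fromCols S R).mulVec (fvec i)) = 0) :
    M.mulVec (fun j => (∑ i ∈ Finset.range (d + 1),
        ((Matrix.fromCols M (0 : Matrix (Fin a ⊕ Fin b) (Fin b) F)) ^ i *
          Matrix.fromCols S R).mulVec (fvec i)) (Sum.inl j)) +
      S.mulVec (fun j => c (Sum.inl j)) = 0 := by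
  have key : ∀ (A : Matrix (Fin a ⊕ Fin b) (Fin a) F)
      (x : Fin a ⊕ Fin b → F),
      (Matrix.fromCols A (0 : Matrix (Fin a ⊕ Fin b) (Fin b) F)).mulVec x =
        A.mulVec (fun j => x (Sum.inl j)) := by
    intro A x
    ext i
    simp [Matrix.mulVec, Matrix.fromCols, Fintype.sum_sum_type, dotProduct]
  have key2 : ∀ (x : Fin b ⊕ Fin s → F),
      (Matrix.fromCols S (0 : Matrix (Fin a ⊕ Fin b) (Fin s) F)).mulVec x =
        S.mulVec (fun j => x (Sum.inl j)) := by
    intro x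
    ext i
    simp [Matrix.mulVec, Matrix.fromCols, Fintype.sum_sum_type, dotProduct]
  rw [key M, key2] at hrel
  linear_combination (norm := skip) hrel
  abel
end

section
/- The block Wiedemann evaluation strategy using checkpoints performs (1 + n/m + 1/n)·N sparse matrix-vector products in total: the sequence step requires n·(⌈N/m⌉ + ⌈N/n⌉) ≈ (1 + n/m)·N products, and the solution step with stored checkpoints M₀^{Kj}y requires only deg F ≈ N/n additional products. In particular, as m/n → ∞ and n → ∞ with m ≫ n, the total count (1 + n/m + 1/n)·N tends to N. -/
open Filter Topology

lemma mul_div_add_div_eq {R : Type*} [Field R] (N m : R) {n : R} (hn : n ≠ 0) :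
    n * (N / m + N / n) = (1 + n / m) * N := by
  field_simp
  ring

lemma tendsto_div_nhds_zero_of_div_tendsto_atTop {ι : Type*} {l : Filter ι} {f g : ι → ℝ}
    (h : Tendsto (fun k => f k / g k) l atTop) : Tendsto (fun k => g k / f k) l (𝓝 0) := by
  simpa only [Pi.inv_def, inv_div] using h.inv_tendsto_atTop

lemma tendsto_one_add_div_add_inv {ι : Type*} {l : Filter ι} {m n : ι → ℝ}
    (hmn : Tendsto (fun k => m k / n k) l atTop) (hn : Tendsto n l atTop) :
    Tendsto (fun k => 1 + n k / m k + 1 / n k) l (𝓝 1) := by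
  have hratio := tendsto_div_nhds_zero_of_div_tendsto_atTop hmn
  have hinv : Tendsto (fun k => 1 / n k) l (𝓝 0) := by
    simpa only [Pi.inv_def, one_div] using hn.inv_tendsto_atTop
  simpa using (tendsto_const_nhds (x := (1 : ℝ))).add hratio |>.add hinv

/-- Operation count of the checkpointed block Wiedemann evaluation strategy:
the sequence step costs `n·(N/m + N/n) = (1 + n/m)·N` SpMVs, the solution step
adds `N/n` more for a total `(1 + n/m + 1/n)·N`, and as `n → ∞` with
`m/n → ∞` this total tends to `N`. -/
theorem block_wiedemann_spmv_count (N : ℝ) :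
    (∀ m n : ℝ, 0 < m → 0 < n →
      n * (N / m + N / n) = (1 + n / m) * N ∧
      (1 + n / m) * N + N / n = (1 + n / m + 1 / n) * N) ∧
    (∀ m n : ℕ → ℝ,
      Tendsto (fun k => m k / n k) atTop atTop →
      Tendsto n atTop atTop →
      Tendsto (fun k => (1 + n k / m k + 1 / n k) * N) atTop (nhds N)) := by
  refine ⟨fun m n _ hn => ⟨mul_div_add_div_eq N m hn.ne', by ring⟩, fun m n hmn hn => ?_⟩
  simpa using (tendsto_one_add_div_add_inv hmn hn).mul_const N
end
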